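/- Let Φ be a unital positive linear map, and A, B strictly positive operators with mA ≤ B ≤ MA for 0 < m < M, and p ∈ [-1,0). Then Φ(T_p(A|B)) ≥ T_p(Φ(A)|Φ(B)) - ((1 - K(m,M,p))/p)·(Φ(A) ♯_p Φ(B)), where T_p(A|B) = (A ♯_p B - A)/p is the Tsallis relative operator entropy and K(m,M,p) is the generalized Kantorovich constant. -/

import Mathlib

/-!
Write `C = A^(-1/2) B A^(-1/2)`, so that `A ♯_p B = A^(1/2) C^p A^(1/2)` and `m ≤ C ≤ M`.
Since `t ↦ t^p` is convex, it lies below its secant `α t + β` on `[m, M]`; by the functional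
calculus and conjugation, `A ♯_p B ≤ α B + β A`, and the positive map gives
`Φ(A ♯_p B) ≤ α Φ(B) + β Φ(A)`. The same secant line is tangent to the convex curve
`K(m, M, p) t^p` at some `t₀ > 0`, hence lies below it on all of `(0, ∞)`; conjugating as
before, now for the pair `Φ(A), Φ(B)`, gives
`α Φ(B) + β Φ(A) ≤ K(m, M, p) (Φ(A) ♯_p Φ(B))`.
Dividing `Φ(A ♯_p B) ≤ K(m, M, p) (Φ(A) ♯_p Φ(B))` by `p < 0` is the claim.
-/

/-- The weighted geometric-type mean `A ♯_p B = A^(1/2) (A^(-1/2) B A^(-1/2))^p A^(1/2)`. -/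
noncomputable def sharpPow {H : Type*} [NormedAddCommGroup H] [InnerProductSpace ℂ H]
    [CompleteSpace H] (p : ℝ) (A B : H →L[ℂ] H) : H →L[ℂ] H :=
  cfc (fun t : ℝ => t ^ (1 / 2 : ℝ)) A *
    cfc (fun t : ℝ => t ^ p) (cfc (fun t : ℝ => t ^ (-(1 / 2) : ℝ)) A * B *
      cfc (fun t : ℝ => t ^ (-(1 / 2) : ℝ)) A) *
    cfc (fun t : ℝ => t ^ (1 / 2 : ℝ)) A

/-- The Tsallis relative operator entropy `T_p(A|B) = (A ♯_p B - A) / p`. -/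
noncomputable def tsallis {H : Type*} [NormedAddCommGroup H] [InnerProductSpace ℂ H]
    [CompleteSpace H] (p : ℝ) (A B : H →L[ℂ] H) : H →L[ℂ] H :=
  p⁻¹ • (sharpPow p A B - A)

open Real

lemma one_add_mul_sub_one_le_rpow_of_nonpos {u p : ℝ} (hu : 0 < u) (hp : p ≤ 0) :
    1 + p * (u - 1) ≤ u ^ p := by
  have h1p : 0 < 1 - p := by linarith
  -- weighted AM-GM for `u ^ p` and `u` with weights `1 : -p`
  have amgm := geom_mean_le_arith_mean2_weighted (w₁ := 1 / (1 - p)) (w₂ := -p / (1 - p))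
    (by positivity) (div_nonneg (by linarith) h1p.le) (rpow_nonneg hu.le p) hu.le
    (by field_simp; ring)
  rw [← rpow_mul hu.le, ← rpow_add hu, show p * (1 / (1 - p)) + -p / (1 - p) = 0 by
    field_simp; ring, rpow_zero] at amgm
  have := mul_le_mul_of_nonneg_left amgm h1p.le
  field_simp at this
  linarith

lemma rpow_tangent_le_rpow_of_nonpos {x y p : ℝ} (hx : 0 < x) (hy : 0 < y) (hp : p ≤ 0) :
    y ^ p + p * y ^ (p - 1) * (x - y) ≤ x ^ p := by
  have h := mul_le_mul_of_nonneg_left (one_add_mul_sub_one_le_rpow_of_nonpos (div_pos hx hy) hp)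
    (rpow_pos_of_pos hy p).le
  rw [div_rpow hx.le hy.le, mul_div_cancel₀ _ (rpow_pos_of_pos hy p).ne'] at h
  rw [rpow_sub_one hy.ne']
  calc y ^ p + p * (y ^ p / y) * (x - y) = y ^ p * (1 + p * (x / y - 1)) := by
        field_simp
    _ ≤ x ^ p := h

lemma rpow_le_secant_of_nonpos {m M p t : ℝ} (hm : 0 < m) (hmM : m < M) (hp : p ≤ 0)
    (htm : m ≤ t) (htM : t ≤ M) :
    t ^ p ≤ (M ^ p - m ^ p) / (M - m) * t + (M * m ^ p - m * M ^ p) / (M - m) := by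
  have ht : 0 < t := hm.trans_le htm
  have tangent_m := mul_le_mul_of_nonneg_left (rpow_tangent_le_rpow_of_nonpos hm ht hp)
    (sub_nonneg.2 htM)
  have tangent_M := mul_le_mul_of_nonneg_left (rpow_tangent_le_rpow_of_nonpos (hm.trans hmM) ht hp)
    (sub_nonneg.2 htm)
  rw [div_mul_eq_mul_div, ← add_div, le_div_iff₀ (by linarith)]
  linarith

noncomputable def kantorovichConst (m M p : ℝ) : ℝ :=
  (m * M ^ p - M * m ^ p) / ((p - 1) * (M - m)) *
    (((p - 1) / p) * (M ^ p - m ^ p) / (m * M ^ p - M * m ^ p)) ^ p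

lemma secant_le_kantorovichConst_mul_rpow {m M p t : ℝ} (hm : 0 < m) (hmM : m < M) (hp : p < 0)
    (ht : 0 < t) :
    (M ^ p - m ^ p) / (M - m) * t + (M * m ^ p - m * M ^ p) / (M - m) ≤
      kantorovichConst m M p * t ^ p := by
  have hd : M ^ p - m ^ p < 0 := sub_neg.2 (rpow_lt_rpow_of_neg hm hmM hp)
  have he : m * M ^ p - M * m ^ p < 0 := by nlinarith [rpow_pos_of_pos hm p]
  have hMm : 0 < M - m := sub_pos.2 hmM
  have hp1 : p - 1 < 0 := by linarith
  -- the secant is the tangent line of `K(m, M, p) t ^ p` at `t₀`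
  set t₀ := p / (p - 1) * ((m * M ^ p - M * m ^ p) / (M ^ p - m ^ p))
  set c := (m * M ^ p - M * m ^ p) / ((p - 1) * (M - m))
  have ht₀ : 0 < t₀ :=
    mul_pos (div_pos_of_neg_of_neg hp hp1) (div_pos_of_neg_of_neg he hd)
  have hc : 0 < c := div_pos_of_neg_of_neg he (mul_neg_of_neg_of_pos hp1 hMm)
  have hK : kantorovichConst m M p = c * (t₀ ^ p)⁻¹ := by
    have : (p - 1) / p * (M ^ p - m ^ p) / (m * M ^ p - M * m ^ p) = t₀⁻¹ := by
      simp only [t₀]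
      field_simp
    rw [kantorovichConst, this, inv_rpow ht₀.le]
  have tangent := mul_le_mul_of_nonneg_left (rpow_tangent_le_rpow_of_nonpos ht ht₀ hp.le)
    (hK ▸ by positivity : 0 ≤ kantorovichConst m M p)
  refine le_of_eq_of_le ?_ tangent
  calc (M ^ p - m ^ p) / (M - m) * t + (M * m ^ p - m * M ^ p) / (M - m)
      = c * (1 + p * (t - t₀) / t₀) := by
        rw [show M * m ^ p - m * M ^ p = -(m * M ^ p - M * m ^ p) by ring]
        simp only [c, t₀]
        generalize M ^ p - m ^ p = d at *
        generalize m * M ^ p - M * m ^ p = e at *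
        field_simp [hp.ne, hp1.ne, hd.ne, he.ne]
        ring
    _ = c * (t₀ ^ p)⁻¹ * (t₀ ^ p + p * t₀ ^ (p - 1) * (t - t₀)) := by
        rw [rpow_sub_one ht₀.ne']
        field_simp
    _ = _ := by rw [hK]

section Operator

variable {H : Type*} [NormedAddCommGroup H] [InnerProductSpace ℂ H] [CompleteSpace H]
  {A B : H →L[ℂ] H}

lemma sharpPow_eq_rpow (p : ℝ) (hA : 0 ≤ A) (B : H →L[ℂ] H) :
    sharpPow p A B = A ^ (1 / 2 : ℝ) *
      cfc (fun t : ℝ => t ^ p) (A ^ (-(1 / 2) : ℝ) * B * A ^ (-(1 / 2) : ℝ)) *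
        A ^ (1 / 2 : ℝ) := by
  simp only [sharpPow, CFC.rpow_eq_cfc_real hA]

lemma rpow_neg_half_mul_self_mul (hA : IsStrictlyPositive A) :
    A ^ (-(1 / 2) : ℝ) * A * A ^ (-(1 / 2) : ℝ) = 1 := by
  nth_rw 2 [← CFC.rpow_one A]
  rw [← CFC.rpow_add hA.isUnit, ← CFC.rpow_add hA.isUnit]
  norm_num [CFC.rpow_zero A]

lemma isStrictlyPositive_rpow_neg_half_conj (hA : IsStrictlyPositive A)
    (hB : IsStrictlyPositive B) :
    IsStrictlyPositive (A ^ (-(1 / 2) : ℝ) * B * A ^ (-(1 / 2) : ℝ)) :=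
  have hi := IsStrictlyPositive.rpow A (-(1 / 2)) hA
  hB.conjugate_of_isUnit_of_isSelfAdjoint _ _ hi.isUnit hi.isSelfAdjoint

lemma spectrum_rpow_neg_half_conj_subset_Icc (hA : IsStrictlyPositive A) (hB : IsSelfAdjoint B)
    {m M : ℝ} (hmA : m • A ≤ B) (hBM : B ≤ M • A) :
    spectrum ℝ (A ^ (-(1 / 2) : ℝ) * B * A ^ (-(1 / 2) : ℝ)) ⊆ Set.Icc m M := by
  have hi : IsSelfAdjoint (A ^ (-(1 / 2) : ℝ)) := CFC.rpow_nonneg.isSelfAdjoint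
  have conj (c : ℝ) :
      A ^ (-(1 / 2) : ℝ) * (c • A) * A ^ (-(1 / 2) : ℝ) = algebraMap ℝ _ c := by
    rw [mul_smul_comm, smul_mul_assoc, rpow_neg_half_mul_self_mul hA,
      Algebra.algebraMap_eq_smul_one]
  have hC := hB.conjugate_self hi
  intro x hx
  exact ⟨(algebraMap_le_iff_le_spectrum hC).1 (conj m ▸ hi.conjugate_le_conjugate hmA) x hx,
    (le_algebraMap_iff_spectrum_le hC).1 (conj M ▸ hi.conjugate_le_conjugate hBM) x hx⟩

lemma rpow_half_conj_cfc_affine (hA : IsStrictlyPositive A) (hB : IsSelfAdjoint B) (a b : ℝ) :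
    A ^ (1 / 2 : ℝ) *
      cfc (fun t : ℝ => a * t + b) (A ^ (-(1 / 2) : ℝ) * B * A ^ (-(1 / 2) : ℝ)) *
        A ^ (1 / 2 : ℝ) = a • B + b • A := by
  have hC := hB.conjugate_self (CFC.rpow_nonneg (a := A) (y := -(1 / 2))).isSelfAdjoint
  have h₁ : A ^ (1 / 2 : ℝ) * A ^ (-(1 / 2) : ℝ) = 1 := CFC.rpow_mul_rpow_neg _
  have h₂ : A ^ (1 / 2 : ℝ) * A ^ (1 / 2 : ℝ) = A := by
    rw [← CFC.rpow_add hA.isUnit, add_halves, CFC.rpow_one A]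
  rw [cfc_add .., cfc_const_mul_id _ _ hC, cfc_const _ _ hC, Algebra.algebraMap_eq_smul_one]
  simp only [mul_add, add_mul, mul_smul_comm, smul_mul_assoc, mul_one, h₂, ← mul_assoc, h₁,
    one_mul]
  simp only [mul_assoc, CFC.rpow_neg_mul_rpow _ hA, mul_one]

lemma sharpPow_le_of_rpow_le {p m M a b : ℝ} (hA : IsStrictlyPositive A)
    (hB : IsStrictlyPositive B) (hmA : m • A ≤ B) (hBM : B ≤ M • A)
    (h : ∀ t ∈ Set.Icc m M, t ^ p ≤ a * t + b) :
    sharpPow p A B ≤ a • B + b • A := by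
  have hC := isStrictlyPositive_rpow_neg_half_conj hA hB
  have hspec := spectrum_rpow_neg_half_conj_subset_Icc hA hB.isSelfAdjoint hmA hBM
  rw [sharpPow_eq_rpow p hA.nonneg, ← rpow_half_conj_cfc_affine hA hB.isSelfAdjoint]
  refine (CFC.rpow_nonneg).isSelfAdjoint.conjugate_le_conjugate
    (cfc_mono (fun t ht => h t (hspec ht)) ?_)
  exact continuousOn_id.rpow_const fun t ht => .inl (hC.spectrum_pos ht).ne'

lemma le_smul_sharpPow_of_le_rpow {p a b k : ℝ} (hA : IsStrictlyPositive A)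
    (hB : IsStrictlyPositive B) (h : ∀ t > 0, a * t + b ≤ k * t ^ p) :
    a • B + b • A ≤ k • sharpPow p A B := by
  have hC := isStrictlyPositive_rpow_neg_half_conj hA hB
  have hcont : ContinuousOn (fun t : ℝ => t ^ p)
      (spectrum ℝ (A ^ (-(1 / 2) : ℝ) * B * A ^ (-(1 / 2) : ℝ))) :=
    continuousOn_id.rpow_const fun t ht => .inl (hC.spectrum_pos ht).ne'
  rw [sharpPow_eq_rpow p hA.nonneg, ← rpow_half_conj_cfc_affine hA hB.isSelfAdjoint,
    ← smul_mul_assoc, ← mul_smul_comm, ← cfc_const_mul k _ _ hcont]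
  exact (CFC.rpow_nonneg).isSelfAdjoint.conjugate_le_conjugate
    (cfc_mono (fun t ht => h t (hC.spectrum_pos ht)) (hg := continuousOn_const.mul hcont))

end Operator

lemma IsStrictlyPositive.map_of_map_one {A₁ A₂ : Type*} [CStarAlgebra A₁] [PartialOrder A₁]
    [StarOrderedRing A₁] [CStarAlgebra A₂] [PartialOrder A₂] [StarOrderedRing A₂]
    (Φ : A₁ →ₚ[ℂ] A₂) (hΦ : Φ 1 = 1) {a : A₁} (ha : IsStrictlyPositive a) :
    IsStrictlyPositive (Φ a) := by
  rcases subsingleton_or_nontrivial A₁ with _ | _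
  · rw [Subsingleton.elim a 1, hΦ]
    exact isStrictlyPositive_one
  obtain ⟨r, hr, hra⟩ :=
    (CFC.exists_pos_algebraMap_le_iff ha.isSelfAdjoint).2 fun x hx => ha.spectrum_pos hx
  refine (isStrictlyPositive_algebraMap hr).of_le ?_
  have := OrderHomClass.mono Φ hra
  have hsmul : Φ (r • 1) = r • Φ 1 := Φ.toLinearMap.map_smul_of_tower r 1
  rwa [Algebra.algebraMap_eq_smul_one, hsmul, hΦ, ← Algebra.algebraMap_eq_smul_one] at this

theorem stmt_17_general {H K : Type*}
    [NormedAddCommGroup H] [InnerProductSpace ℂ H] [CompleteSpace H]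
    [NormedAddCommGroup K] [InnerProductSpace ℂ K] [CompleteSpace K]
    (Φ : (H →L[ℂ] H) →ₗ[ℂ] (K →L[ℂ] K))
    (hΦpos : ∀ T : H →L[ℂ] H, 0 ≤ T → 0 ≤ Φ T) (hΦunital : Φ 1 = 1)
    (A B : H →L[ℂ] H) (hA0 : 0 ≤ A) (hAu : IsUnit A)
    (m M : ℝ) (hm : 0 < m) (hmM : m < M)
    (hmA : m • A ≤ B) (hBM : B ≤ M • A)
    (p : ℝ) (hp0 : p < 0) (Kc : ℝ)
    (hK : Kc = (m * M ^ p - M * m ^ p) / ((p - 1) * (M - m)) *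
      (((p - 1) / p) * (M ^ p - m ^ p) / (m * M ^ p - M * m ^ p)) ^ p) :
    tsallis p (Φ A) (Φ B) - ((1 - Kc) / p) • sharpPow p (Φ A) (Φ B) ≤
      Φ (tsallis p A B) := by
  have hA : IsStrictlyPositive A := hAu.isStrictlyPositive hA0
  have hB : IsStrictlyPositive B := (hA.smul hm).of_le hmA
  let Ψ := PositiveLinearMap.mk₀ Φ hΦpos
  have hΦmono : Monotone Φ := Ψ.monotone'
  have hsecant : Φ (sharpPow p A B) ≤
      ((M ^ p - m ^ p) / (M - m)) • Φ B + ((M * m ^ p - m * M ^ p) / (M - m)) • Φ A := by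
    simpa only [map_add, Φ.map_smul_of_tower] using hΦmono <|
      sharpPow_le_of_rpow_le hA hB hmA hBM fun t ht =>
        rpow_le_secant_of_nonpos hm hmM hp0.le ht.1 ht.2
  have hkantorovich :
      ((M ^ p - m ^ p) / (M - m)) • Φ B + ((M * m ^ p - m * M ^ p) / (M - m)) • Φ A ≤
        Kc • sharpPow p (Φ A) (Φ B) :=
    hK ▸ le_smul_sharpPow_of_le_rpow (hA.map_of_map_one Ψ hΦunital)
      (hB.map_of_map_one Ψ hΦunital) fun t ht => secant_le_kantorovichConst_mul_rpow hm hmM hp0 ht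
  have hT : tsallis p (Φ A) (Φ B) - ((1 - Kc) / p) • sharpPow p (Φ A) (Φ B) =
      p⁻¹ • (Kc • sharpPow p (Φ A) (Φ B) - Φ A) := by
    simp only [tsallis]
    module
  rw [hT, tsallis, Φ.map_smul_of_tower, map_sub]
  exact smul_le_smul_of_nonpos_left (sub_le_sub_right (hsecant.trans hkantorovich) _)
    (inv_nonpos.2 hp0.le)

/-- Ratio-type complement for the Tsallis relative operator entropy. -/
theorem stmt_17 {H K : Type*}
    [NormedAddCommGroup H] [InnerProductSpace ℂ H] [CompleteSpace H]
    [NormedAddCommGroup K] [InnerProductSpace ℂ K] [CompleteSpace K]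
    (Φ : (H →L[ℂ] H) →ₗ[ℂ] (K →L[ℂ] K))
    (hΦpos : ∀ T : H →L[ℂ] H, 0 ≤ T → 0 ≤ Φ T) (hΦunital : Φ 1 = 1)
    (A B : H →L[ℂ] H) (hA0 : 0 ≤ A) (hAu : IsUnit A) (hB0 : 0 ≤ B) (hBu : IsUnit B)
    (m M : ℝ) (hm : 0 < m) (hmM : m < M)
    (hmA : m • A ≤ B) (hBM : B ≤ M • A)
    (p : ℝ) (hp1 : -1 ≤ p) (hp0 : p < 0) (Kc : ℝ)
    (hK : Kc = (m * M ^ p - M * m ^ p) / ((p - 1) * (M - m)) *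
      (((p - 1) / p) * (M ^ p - m ^ p) / (m * M ^ p - M * m ^ p)) ^ p) :
    tsallis p (Φ A) (Φ B) - ((1 - Kc) / p) • sharpPow p (Φ A) (Φ B) ≤
      Φ (tsallis p A B) :=
  stmt_17_general Φ hΦpos hΦunital A B hA0 hAu m M hm hmM hmA hBM p hp0 Kc hK
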